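/- The operator (I_3 ⊗ ψ)(ρ^upb), obtained by applying the Choi map ψ directly to the second factor of the TILES state, is positive semidefinite; hence the Choi map without filtering does not detect the entanglement of ρ^upb. -/
import Mathlib


open Matrix
open scoped ComplexOrder

/-- Standard basis vectors of `ℂ^3`. -/
noncomputable def e (i : Fin 3) : Fin 3 → ℂ := Pi.single i 1

/-- Tensor product of vectors in `ℂ^3`. -/
noncomputable def tp (u v : Fin 3 → ℂ) : Fin 3 × Fin 3 → ℂ := fun p => u p.1 * v p.2

/-- The five TILES unextendible-product-basis vectors in `ℂ^3 ⊗ ℂ^3`. -/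
noncomputable def tiles : Fin 5 → (Fin 3 × Fin 3 → ℂ)
  | 0 => ((Real.sqrt 2 : ℂ))⁻¹ • tp (e 0) (e 0 - e 1)
  | 1 => ((Real.sqrt 2 : ℂ))⁻¹ • tp (e 0 - e 1) (e 2)
  | 2 => ((Real.sqrt 2 : ℂ))⁻¹ • tp (e 2) (e 1 - e 2)
  | 3 => ((Real.sqrt 2 : ℂ))⁻¹ • tp (e 1 - e 2) (e 0)
  | 4 => (3 : ℂ)⁻¹ • tp (e 0 + e 1 + e 2) (e 0 + e 1 + e 2)

/-- The TILES bound entangled state `ρ^upb = (1/4)(I₉ − Σᵢ |ψᵢ⟩⟨ψᵢ|)`. -/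
noncomputable def rhoUpb : Matrix (Fin 3 × Fin 3) (Fin 3 × Fin 3) ℂ :=
  (4 : ℂ)⁻¹ • ((1 : Matrix (Fin 3 × Fin 3) (Fin 3 × Fin 3) ℂ)
    - ∑ i : Fin 5, Matrix.vecMulVec (tiles i) (star (tiles i)))

/-- The second Choi map `ψ` on 3×3 complex matrices. -/
noncomputable def choiPsi (a : Matrix (Fin 3) (Fin 3) ℂ) : Matrix (Fin 3) (Fin 3) ℂ :=
  (1 / 2 : ℂ) •
    !![a 0 0 + a 1 1, -a 0 1, -a 0 2;
       -a 1 0, a 1 1 + a 2 2, -a 1 2;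
       -a 2 0, -a 2 1, a 2 2 + a 0 0]

/-- `id ⊗ ψ`: apply `ψ` to the second tensor factor (blockwise). -/
noncomputable def psiSnd (ρ : Matrix (Fin 3 × Fin 3) (Fin 3 × Fin 3) ℂ) :
    Matrix (Fin 3 × Fin 3) (Fin 3 × Fin 3) ℂ :=
  Matrix.of fun p q => choiPsi (Matrix.of fun a b => ρ (p.1, a) (q.1, b)) p.2 q.2

/-! ### Auxiliary decomposition data -/

/-- Integer lower-triangular factor. -/
def Lz : Matrix (Fin 9) (Fin 9) ℤ :=
  !![14,0,0,0,0,0,0,0,0;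
     -7,7,0,0,0,0,0,0,0;
     2,2,10,0,0,0,0,0,0;
     -4,0,2,83,0,0,0,0,0;
     2,4,0,10,175,0,0,0,0;
     2,2,3,7,-2,449,0,0,0;
     -4,0,2,13,20,60,567,0,0;
     2,-2,2,8,-26,62,92,706,0;
     2,2,-4,14,-4,198,120,-435,1]

/-- Integer diagonal entries (all nonnegative). -/
def uz : Fin 9 → ℤ := ![2959931475,8879794425,5327876655,128382570,25676514,2373219,1464950,931675,131536671525]

/-- `144 · (ψ⊗id)(ρ)` as an integer matrix (in the `Fin 9` indexing). -/
def Mz : Matrix (Fin 9) (Fin 9) ℤ :=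
  !![14,-7,2,-4,2,2,-4,2,2;
     -7,14,2,2,5,2,2,-4,2;
     2,2,14,2,2,5,2,2,-4;
     -4,2,2,23,2,2,5,2,2;
     2,5,2,2,23,2,2,-4,2;
     2,2,5,2,2,14,2,2,5;
     -4,2,2,5,2,2,14,2,2;
     2,-4,2,2,-4,2,2,14,-7;
     2,2,-4,2,2,5,2,-7,14]

set_option maxRecDepth 100000 in
theorem ldl_int : Lz * Matrix.diagonal uz * Lzᵀ = (41439040650 : ℤ) • Mz := by decide

/-- Index flattening `Fin 3 × Fin 3 → Fin 9`. -/
def fIdx : Fin 3 × Fin 3 → Fin 9 := fun p => ⟨3 * p.1.val + p.2.val, by omega⟩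

noncomputable def Lc : Matrix (Fin 9) (Fin 9) ℂ := Lz.map (Int.cast)
noncomputable def dc : Fin 9 → ℂ := fun k => (((uz k : ℝ) / (144 * 41439040650) : ℝ) : ℂ)

lemma dc_nonneg (k : Fin 9) : 0 ≤ dc k := by
  fin_cases k <;>
  · rw [dc]
    rw [show ∀ r : ℝ, (0:ℂ) ≤ (r:ℂ) ↔ 0 ≤ r from fun r => Complex.zero_le_real]
    norm_num [uz]

lemma dc_smul : Matrix.diagonal dc
    = ((144 * 41439040650 : ℂ))⁻¹ • Matrix.diagonal (fun k => ((uz k : ℂ))) := by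
  have h : dc = ((144 * 41439040650 : ℂ))⁻¹ • (fun k => ((uz k : ℂ))) := by
    funext k
    simp only [dc, Pi.smul_apply, smul_eq_mul, Complex.ofReal_div]
    push_cast
    ring
  rw [h, Matrix.diagonal_smul]

lemma conjT_Lc : Lcᴴ = Lzᵀ.map (Int.cast) := by
  ext i j
  simp [Lc, Matrix.conjTranspose_apply, Matrix.map_apply]

lemma cast_ldl : Lc * Matrix.diagonal dc * Lcᴴ = (144:ℂ)⁻¹ • Mz.map (Int.cast) := by
  have hmap : (Lz * Matrix.diagonal uz * Lzᵀ).map ((Int.castRingHom ℂ) : ℤ → ℂ)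
      = Lc * Matrix.diagonal (fun k => ((uz k : ℂ))) * Lzᵀ.map (Int.cast) := by
    rw [Matrix.map_mul, Matrix.map_mul, Matrix.diagonal_map (by simp)]
    rfl
  have hmap2 : ((41439040650 : ℤ) • Mz).map ((Int.castRingHom ℂ) : ℤ → ℂ)
      = (41439040650 : ℂ) • Mz.map (Int.cast) := by
    ext i j
    simp only [Matrix.map_apply, Matrix.smul_apply, smul_eq_mul, Int.coe_castRingHom]
    push_cast
    ring
  rw [conjT_Lc, dc_smul, Matrix.mul_smul, Matrix.smul_mul, ← hmap, ldl_int, hmap2,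
    smul_smul]
  norm_num

/-! ### Removing the square roots from the outer products -/

noncomputable def w : Fin 5 → (Fin 3 × Fin 3 → ℂ)
  | 0 => tp (e 0) (e 0 - e 1)
  | 1 => tp (e 0 - e 1) (e 2)
  | 2 => tp (e 2) (e 1 - e 2)
  | 3 => tp (e 1 - e 2) (e 0)
  | 4 => tp (e 0 + e 1 + e 2) (e 0 + e 1 + e 2)

lemma outer_smul (a : ℂ) (u : Fin 3 × Fin 3 → ℂ) :
    Matrix.vecMulVec (a • u) (star (a • u)) = (a * star a) • Matrix.vecMulVec u (star u) := by
  ext p q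
  simp [Matrix.vecMulVec_apply, Pi.smul_apply, mul_comm, mul_assoc, mul_left_comm]

lemma sqrt_fact : ((Real.sqrt 2 : ℂ))⁻¹ * star ((Real.sqrt 2 : ℂ))⁻¹ = (2:ℂ)⁻¹ := by
  rw [star_inv₀, Complex.star_def, Complex.conj_ofReal, ← mul_inv, ← Complex.ofReal_mul,
    Real.mul_self_sqrt (by norm_num)]
  norm_num

lemma third_fact : (3 : ℂ)⁻¹ * star (3:ℂ)⁻¹ = (9:ℂ)⁻¹ := by
  norm_num [Complex.ext_iff]

lemma rho_eq : rhoUpb = (4 : ℂ)⁻¹ • ((1 : Matrix (Fin 3 × Fin 3) (Fin 3 × Fin 3) ℂ)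
    - ((2:ℂ)⁻¹ • (Matrix.vecMulVec (w 0) (star (w 0)) + Matrix.vecMulVec (w 1) (star (w 1))
      + Matrix.vecMulVec (w 2) (star (w 2)) + Matrix.vecMulVec (w 3) (star (w 3)))
      + (9:ℂ)⁻¹ • Matrix.vecMulVec (w 4) (star (w 4)))) := by
  have h0 : Matrix.vecMulVec (tiles 0) (star (tiles 0))
      = (2:ℂ)⁻¹ • Matrix.vecMulVec (w 0) (star (w 0)) := by
    rw [show tiles 0 = ((Real.sqrt 2 : ℂ))⁻¹ • w 0 from rfl, outer_smul, sqrt_fact]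
  have h1 : Matrix.vecMulVec (tiles 1) (star (tiles 1))
      = (2:ℂ)⁻¹ • Matrix.vecMulVec (w 1) (star (w 1)) := by
    rw [show tiles 1 = ((Real.sqrt 2 : ℂ))⁻¹ • w 1 from rfl, outer_smul, sqrt_fact]
  have h2 : Matrix.vecMulVec (tiles 2) (star (tiles 2))
      = (2:ℂ)⁻¹ • Matrix.vecMulVec (w 2) (star (w 2)) := by
    rw [show tiles 2 = ((Real.sqrt 2 : ℂ))⁻¹ • w 2 from rfl, outer_smul, sqrt_fact]
  have h3 : Matrix.vecMulVec (tiles 3) (star (tiles 3))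
      = (2:ℂ)⁻¹ • Matrix.vecMulVec (w 3) (star (w 3)) := by
    rw [show tiles 3 = ((Real.sqrt 2 : ℂ))⁻¹ • w 3 from rfl, outer_smul, sqrt_fact]
  have h4 : Matrix.vecMulVec (tiles 4) (star (tiles 4))
      = (9:ℂ)⁻¹ • Matrix.vecMulVec (w 4) (star (w 4)) := by
    rw [show tiles 4 = (3:ℂ)⁻¹ • w 4 from rfl, outer_smul, third_fact]
  rw [rhoUpb, Fin.sum_univ_five, h0, h1, h2, h3, h4]
  module


set_option maxHeartbeats 4000000 in
theorem key : psiSnd rhoUpb = ((144:ℂ)⁻¹ • Mz.map (Int.cast)).submatrix fIdx fIdx := by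
  ext p q
  fin_cases p <;> fin_cases q <;>
  · simp [psiSnd, rho_eq, choiPsi, w, tp, e, Matrix.one_apply, Matrix.vecMulVec_apply,
      Pi.single_apply, Prod.mk.injEq, Matrix.vecHead, Matrix.vecTail]
    norm_num [Mz, fIdx, Matrix.map_apply, Complex.ext_iff, Matrix.vecHead, Matrix.vecTail]

/-- the Choi map `ψ` applied directly (without filtering) to the second
factor of the TILES state yields a positive semidefinite operator, hence fails to
detect the entanglement of `ρ^upb`. -/
theorem rhoUpb_not_detected : (psiSnd rhoUpb).PosSemidef := by
  rw [key, ← cast_ldl]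
  exact ((Matrix.posSemidef_diagonal_iff.mpr dc_nonneg).mul_mul_conjTranspose_same Lc).submatrix
    fIdx
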